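/- For all z in the unit disk, z·₂F₁(1,3/2;3;z) = 4z/(1+√(1-z))², where √ is the principal branch of the square root. -/

import Mathlib

open Complex MeasureTheory Filter Metric Set

/-- The Gaussian hypergeometric function as a power series. -/
noncomputable def hyp (a b c z : ℂ) : ℂ :=
  ∑' n : ℕ, ((ascPochhammer ℂ n).eval a * (ascPochhammer ℂ n).eval b /
    ((ascPochhammer ℂ n).eval c * (n.factorial : ℂ))) * z ^ n

/-!
The coefficients of `₂F₁(1, 3/2; 3; z)` are `C_{n+1} / 4ⁿ`, so the series is `C(z/4)²` for the
Catalan generating function `C(w) = ∑ Cₙ wⁿ`. The Catalan recursion gives `C = 1 + w C²`, hence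
`(1 - 2wC)² = 1 - 4w`. The quotient `(1 - 2wC) / √(1 - 4w)` is continuous with values `±1` on the
connected disc `‖w‖ < 1/4` and equals `1` at `0`, so `1 - 2wC = √(1 - 4w)`, which amounts to
`C(w) (1 + √(1 - 4w)) = 2`.
-/

theorem catalan_le_four_pow (n : ℕ) : catalan n ≤ 4 ^ n :=
  calc catalan n ≤ (n + 1) * catalan n := Nat.le_mul_of_pos_left _ n.succ_pos
    _ = n.centralBinom := succ_mul_catalan_eq_centralBinom n
    _ ≤ (2 * n + 1).choose n := Nat.choose_le_choose n (by omega)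
    _ ≤ 4 ^ n := Nat.choose_middle_le_pow n

theorem succ_succ_mul_catalan_succ (n : ℕ) :
    (n + 2) * catalan (n + 1) = 2 * (2 * n + 1) * catalan n := by
  refine Nat.eq_of_mul_eq_mul_left n.succ_pos ?_
  calc (n + 1) * ((n + 2) * catalan (n + 1))
      = (n + 1) * (n + 1).centralBinom := by rw [← succ_mul_catalan_eq_centralBinom]
    _ = 2 * (2 * n + 1) * n.centralBinom := Nat.succ_mul_centralBinom_succ n
    _ = (n + 1) * (2 * (2 * n + 1) * catalan n) := by
      rw [← succ_mul_catalan_eq_centralBinom]; ring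

theorem ascPochhammer_eval_three_halves_mul_four_pow (n : ℕ) :
    (ascPochhammer ℂ n).eval (3 / 2) * 4 ^ n = catalan (n + 1) * (ascPochhammer ℂ n).eval 3 := by
  induction n with
  | zero => simp
  | succ n ih =>
    have hrec : (n + 3 : ℂ) * catalan (n + 2) = 2 * (2 * n + 3) * catalan (n + 1) := by
      exact_mod_cast succ_succ_mul_catalan_succ (n + 1)
    rw [ascPochhammer_succ_eval, ascPochhammer_succ_eval, pow_succ]
    linear_combination (4 * (3 / 2 + n)) * ih - (ascPochhammer ℂ n).eval 3 * hrec

theorem hyp_coeff_one_three_halves_three (n : ℕ) :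
    (ascPochhammer ℂ n).eval 1 * (ascPochhammer ℂ n).eval (3 / 2) /
      ((ascPochhammer ℂ n).eval 3 * n.factorial) = catalan (n + 1) / 4 ^ n := by
  have h3 : (ascPochhammer ℂ n).eval 3 ≠ 0 := by
    rw [← Nat.cast_ofNat, ← ascPochhammer_eval_cast, Nat.cast_ne_zero]
    exact (ascPochhammer_pos n 3 three_pos).ne'
  have hfact : (n.factorial : ℂ) ≠ 0 := by exact_mod_cast n.factorial_ne_zero
  rw [ascPochhammer_eval_one, div_eq_div_iff (mul_ne_zero h3 hfact) (by norm_num)]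
  linear_combination (n.factorial : ℂ) * ascPochhammer_eval_three_halves_mul_four_pow n

noncomputable def catalanGF (w : ℂ) : ℂ := ∑' n : ℕ, (catalan n : ℂ) * w ^ n

theorem norm_catalan_mul_pow_le (w : ℂ) (n : ℕ) :
    ‖(catalan n : ℂ) * w ^ n‖ ≤ (4 * ‖w‖) ^ n := by
  rw [norm_mul, norm_pow, Complex.norm_natCast, mul_pow]
  gcongr
  exact_mod_cast catalan_le_four_pow n

theorem summable_norm_catalan_mul_pow {w : ℂ} (hw : ‖w‖ < 1 / 4) :
    Summable fun n : ℕ => ‖(catalan n : ℂ) * w ^ n‖ :=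
  .of_nonneg_of_le (fun _ => norm_nonneg _) (norm_catalan_mul_pow_le w)
    (summable_geometric_of_lt_one (by positivity) (by linarith))

theorem catalanGF_sq {w : ℂ} (hw : ‖w‖ < 1 / 4) :
    catalanGF w ^ 2 = ∑' n : ℕ, (catalan (n + 1) : ℂ) * w ^ n := by
  rw [sq, catalanGF, tsum_mul_tsum_eq_tsum_sum_antidiagonal_of_summable_norm
    (summable_norm_catalan_mul_pow hw) (summable_norm_catalan_mul_pow hw)]
  refine tsum_congr fun n => ?_
  rw [catalan_succ', Nat.cast_sum, Finset.sum_mul]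
  refine Finset.sum_congr rfl fun ij hij => ?_
  rw [← Finset.HasAntidiagonal.mem_antidiagonal.mp hij, pow_add]
  push_cast
  ring

theorem catalanGF_eq_one_add_mul_sq {w : ℂ} (hw : ‖w‖ < 1 / 4) :
    catalanGF w = 1 + w * catalanGF w ^ 2 := by
  rw [catalanGF_sq hw, ← tsum_mul_left, catalanGF,
    (summable_norm_catalan_mul_pow hw).of_norm.tsum_eq_zero_add]
  simp only [catalan_zero, Nat.cast_one, pow_zero, mul_one, pow_succ]
  congr 1
  exact tsum_congr fun n => by ring

theorem continuousOn_catalanGF : ContinuousOn catalanGF (ball 0 (1 / 4)) := by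
  intro w hw
  rw [mem_ball_zero_iff] at hw
  obtain ⟨r, hwr, hr⟩ := exists_between hw
  have hr0 : 0 ≤ r := (norm_nonneg w).trans hwr.le
  have hcont : ContinuousOn catalanGF (closedBall 0 r) :=
    continuousOn_tsum (fun n => by fun_prop)
      (summable_geometric_of_lt_one (by positivity) (by linarith : 4 * r < 1))
      fun n x hx => (norm_catalan_mul_pow_le x n).trans <|
        pow_le_pow_left₀ (by positivity) (by gcongr; exact mem_closedBall_zero_iff.mp hx) n
  exact (hcont.continuousAt <| closedBall_mem_nhds_of_mem <| mem_ball_zero_iff.mpr hwr)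
    |>.continuousWithinAt

theorem one_sub_two_mul_catalanGF_sq {w : ℂ} (hw : ‖w‖ < 1 / 4) :
    (1 - 2 * w * catalanGF w) ^ 2 = 1 - 4 * w := by
  linear_combination (-4 * w) * catalanGF_eq_one_add_mul_sq hw

theorem cpow_one_half_sq (x : ℂ) : (x ^ (1 / 2 : ℂ)) ^ 2 = x := by
  rw [one_div, cpow_ofNat_inv_pow]

theorem one_sub_four_mul_mem_slitPlane {w : ℂ} (hw : ‖w‖ < 1 / 4) :
    1 - 4 * w ∈ slitPlane := by
  rw [sub_eq_add_neg, ← neg_mul]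
  exact mem_slitPlane_of_norm_lt_one (by rw [norm_mul, norm_neg, RCLike.norm_ofNat]; linarith)

theorem one_sub_two_mul_catalanGF {w : ℂ} (hw : ‖w‖ < 1 / 4) :
    1 - 2 * w * catalanGF w = (1 - 4 * w) ^ (1 / 2 : ℂ) := by
  set q : ℂ → ℂ := fun u => (1 - 2 * u * catalanGF u) / (1 - 4 * u) ^ (1 / 2 : ℂ)
  have hslit {u : ℂ} (hu : u ∈ ball (0 : ℂ) (1 / 4)) : 1 - 4 * u ∈ slitPlane :=
    one_sub_four_mul_mem_slitPlane (mem_ball_zero_iff.mp hu)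
  have hsqrt_ne {u : ℂ} (hu : u ∈ ball (0 : ℂ) (1 / 4)) : (1 - 4 * u) ^ (1 / 2 : ℂ) ≠ 0 := by
    simp [cpow_eq_zero_iff, slitPlane_ne_zero (hslit hu)]
  have hq_cont : ContinuousOn q (ball 0 (1 / 4)) := by
    refine .div (continuousOn_const.sub ((continuousOn_const.mul continuousOn_id).mul
      continuousOn_catalanGF)) (fun u hu => ?_) fun u hu => hsqrt_ne hu
    exact (ContinuousAt.comp (g := fun x => x ^ (1 / 2 : ℂ)) (f := fun u => 1 - 4 * u)
      (continuousAt_cpow_const (hslit hu)) (by fun_prop)).continuousWithinAt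
  have hq_maps : MapsTo q (ball 0 (1 / 4)) {1, -1} := by
    intro u hu
    have hq_sq : q u ^ 2 = 1 := by
      rw [div_pow, one_sub_two_mul_catalanGF_sq (mem_ball_zero_iff.mp hu), cpow_one_half_sq,
        div_self (slitPlane_ne_zero (hslit hu))]
    exact sq_eq_one_iff.mp hq_sq
  have hq : q w = q 0 :=
    (convex_ball 0 _).isPreconnected.constant_of_mapsTo
      (isDiscrete_iff_discreteTopology.mpr inferInstance) hq_cont hq_maps
      (mem_ball_zero_iff.mpr hw) (mem_ball_self (by norm_num))
  have hq1 : q w = 1 := by simpa [q] using hq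
  exact (div_eq_one_iff_eq (hsqrt_ne (mem_ball_zero_iff.mpr hw))).mp hq1

theorem catalanGF_mul_one_add_sqrt {w : ℂ} (hw : ‖w‖ < 1 / 4) :
    catalanGF w * (1 + (1 - 4 * w) ^ (1 / 2 : ℂ)) = 2 := by
  rcases eq_or_ne w 0 with rfl | hw0
  · have h0 : catalanGF 0 = 1 := by simpa using catalanGF_eq_one_add_mul_sq hw
    norm_num [h0]
  · apply mul_left_cancel₀ hw0
    linear_combination -(1 + (1 - 4 * w) ^ (1 / 2 : ℂ)) / 2 * one_sub_two_mul_catalanGF hw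
      - cpow_one_half_sq (1 - 4 * w) / 2

theorem hyp_one_three_halves_three {z : ℂ} (hz : ‖z‖ < 1) :
    hyp 1 (3 / 2) 3 z = catalanGF (z / 4) ^ 2 := by
  rw [catalanGF_sq (by rw [norm_div, RCLike.norm_ofNat]; linarith), hyp]
  refine tsum_congr fun n => ?_
  rw [hyp_coeff_one_three_halves_three, div_pow]
  ring

theorem stmt1 (z : ℂ) (hz : ‖z‖ < 1) :
    z * hyp 1 (3 / 2) 3 z = 4 * z / (1 + (1 - z) ^ (1 / 2 : ℂ)) ^ 2 := by
  have h := catalanGF_mul_one_add_sqrt (w := z / 4)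
    (by rw [norm_div, RCLike.norm_ofNat]; linarith)
  rw [mul_div_cancel₀ z (by norm_num : (4 : ℂ) ≠ 0)] at h
  have hne : 1 + (1 - z) ^ (1 / 2 : ℂ) ≠ 0 := right_ne_zero_of_mul (h ▸ two_ne_zero)
  rw [hyp_one_three_halves_three hz, eq_div_iff (pow_ne_zero 2 hne)]
  linear_combination z * (catalanGF (z / 4) * (1 + (1 - z) ^ (1 / 2 : ℂ)) + 2) * h
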